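/- Let N ≥ 1, α ∈ (0, N), β > N − α, ρ > 1/2, c > 0, and let f ∈ L¹_loc(ℝ^N) with f ≥ 0 satisfy f(x) ≤ c |x|^{−β} for all |x| ≥ ρ. Then there exists a constant C = C(N, α, β, ρ, c) > 0 such that for all x with |x| ≥ 2ρ: (a) if β < N then ∫_{ℝ^N} f(y) |x − y|^{−α} dy ≤ C |x|^{N−α−β}; (b) if β = N then ∫_{ℝ^N} f(y) |x − y|^{−α} dy ≤ C |x|^{−α} log |x|; (c) if β > N then ∫_{ℝ^N} f(y) |x − y|^{−α} dy ≤ C |x|^{−α}. -/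

import Mathlib

/-!
Split the space into the four regions `‖y‖ < ρ`, `ρ ≤ ‖y‖ < ‖x‖ / 2`, `‖x - y‖ < ‖x‖ / 2` and the
rest. On the first two the kernel is at most `(‖x‖ / 2) ^ (-α)`: on the first `f` contributes its
finite mass, on the second the decay bound leaves `∫ ‖y‖ ^ (-β)` over an annulus, which is of
order `‖x‖ ^ (N - β)`, `log ‖x‖` or `1` according as `β < N`, `β = N` or `β > N`; this is where the
three regimes come from. Near `x` we have `f ≤ c (‖x‖ / 2) ^ (-β)` and `‖x - y‖ ^ (-α)` is
integrable since `α < N`; on the rest `‖x - y‖ ≥ ‖y‖ / 3`, and `‖y‖ ^ (-(α + β))` is integrable at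
infinity since `α + β > N`. The radial integrals are computed exactly in polar coordinates.
-/

open MeasureTheory Set Metric
open scoped ENNReal

local notation "dim" => Module.finrank ℝ

section Geometry

variable {E : Type*} [SeminormedAddCommGroup E] {x y : E}

theorem half_norm_le_norm_sub_of_norm_le_half (h : ‖y‖ ≤ ‖x‖ / 2) : ‖x‖ / 2 ≤ ‖x - y‖ := by
  linarith [norm_sub_norm_le x y]

theorem half_norm_le_norm_of_norm_sub_lt_half (h : ‖x - y‖ < ‖x‖ / 2) : ‖x‖ / 2 ≤ ‖y‖ := by
  have := norm_sub_norm_le x (x - y)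
  rw [sub_sub_cancel] at this
  linarith

theorem norm_le_three_mul_norm_sub (h : ‖x‖ / 2 ≤ ‖x - y‖) : ‖y‖ ≤ 3 * ‖x - y‖ := by
  linarith [norm_sub_norm_le y x, norm_sub_rev y x]

end Geometry

theorem setLIntegral_ofReal_le_const_mul {X : Type*} [MeasurableSpace X] (μ : Measure X)
    {s : Set X} (hs : MeasurableSet s) {F G : X → ℝ} {k : ℝ}
    (hk : 0 ≤ k) (h : ∀ y ∈ s, F y ≤ k * G y) :
    ∫⁻ y in s, ENNReal.ofReal (F y) ∂μ ≤ ENNReal.ofReal k * ∫⁻ y in s, ENNReal.ofReal (G y) ∂μ := by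
  rw [← lintegral_const_mul' _ _ ENNReal.ofReal_ne_top]
  refine setLIntegral_mono' hs fun y hy => ?_
  rw [← ENNReal.ofReal_mul hk]
  exact ENNReal.ofReal_le_ofReal (h y hy)

theorem rpow_neg_norm_sub_le_three_rpow_mul {E : Type*} [SeminormedAddCommGroup E] {x y : E}
    {α : ℝ} (hα : 0 ≤ α) (hy : 0 < ‖y‖) (h : ‖x‖ / 2 ≤ ‖x - y‖) :
    ‖x - y‖ ^ (-α) ≤ 3 ^ α * ‖y‖ ^ (-α) :=
  calc ‖x - y‖ ^ (-α) ≤ (‖y‖ / 3) ^ (-α) :=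
        Real.rpow_le_rpow_of_nonpos (by positivity)
          (by linarith [norm_le_three_mul_norm_sub h]) (neg_nonpos.mpr hα)
    _ = 3 ^ α * ‖y‖ ^ (-α) := by
        rw [Real.div_rpow hy.le zero_le_three, Real.rpow_neg zero_le_three, div_inv_eq_mul,
          mul_comm]

section Decomposition

variable {E : Type*} [NormedAddCommGroup E] [MeasurableSpace E] [BorelSpace E] (μ : Measure E)
  {f : E → ℝ} {α β ρ c : ℝ} {x : E}

theorem setLIntegral_ball_comp_sub_left [μ.IsAddLeftInvariant] [μ.IsNegInvariant]
    (g : E → ℝ≥0∞) (x : E) (r : ℝ) :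
    ∫⁻ y in ball x r, g (x - y) ∂μ = ∫⁻ z in ball 0 r, g z ∂μ := by
  rw [← lintegral_indicator measurableSet_ball, ← lintegral_indicator measurableSet_ball,
    ← lintegral_sub_left_eq_self _ x]
  congr 1 with y
  simp [indicator, dist_eq_norm]

theorem setLIntegral_norm_lt_mul_norm_sub_rpow_neg_le (hα : 0 ≤ α) (hρ : 0 < ρ) (hc : 0 ≤ c)
    (hf0 : ∀ y, 0 ≤ f y) (hdecay : ∀ y : E, ρ ≤ ‖y‖ → f y ≤ c * ‖y‖ ^ (-β))
    (hx : 2 * ρ ≤ ‖x‖) :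
    ∫⁻ y in (‖·‖) ⁻¹' Iio (‖x‖ / 2), ENNReal.ofReal (f y * ‖x - y‖ ^ (-α)) ∂μ ≤
      ENNReal.ofReal ((‖x‖ / 2) ^ (-α)) * ∫⁻ y in ball 0 ρ, ENNReal.ofReal (f y) ∂μ
      + ENNReal.ofReal (c * (‖x‖ / 2) ^ (-α)) *
          ∫⁻ y in (‖·‖) ⁻¹' Ico ρ (‖x‖ / 2), ENNReal.ofReal (‖y‖ ^ (-β)) ∂μ := by
  set r := ‖x‖ / 2 with hr
  have hρr : ρ ≤ r := by linarith
  have kernel_le {y : E} (hy : ‖y‖ ≤ r) : ‖x - y‖ ^ (-α) ≤ r ^ (-α) :=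
    Real.rpow_le_rpow_of_nonpos (hρ.trans_le hρr) (half_norm_le_norm_sub_of_norm_le_half hy)
      (neg_nonpos.mpr hα)
  have hcover : (‖·‖) ⁻¹' Iio r ⊆ ball (0 : E) ρ ∪ (‖·‖) ⁻¹' Ico ρ r := fun y (hy : ‖y‖ < r) => by
    by_cases h : ‖y‖ < ρ
    · exact Or.inl (mem_ball_zero_iff.mpr h)
    · exact Or.inr ⟨not_lt.mp h, hy⟩
  refine (lintegral_mono_set hcover).trans ((lintegral_union_le _ _ _).trans (add_le_add ?_ ?_))
  · refine setLIntegral_ofReal_le_const_mul μ measurableSet_ball (by positivity) fun y hy => ?_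
    rw [mul_comm (r ^ (-α))]
    exact mul_le_mul_of_nonneg_left (kernel_le ((mem_ball_zero_iff.mp hy).le.trans hρr)) (hf0 y)
  · refine setLIntegral_ofReal_le_const_mul μ (measurable_norm measurableSet_Ico) (by positivity)
      fun y ⟨hρy, hyr⟩ => ?_
    calc f y * ‖x - y‖ ^ (-α) ≤ (c * ‖y‖ ^ (-β)) * r ^ (-α) :=
          mul_le_mul (hdecay y hρy) (kernel_le hyr.le) (by positivity) (by positivity)
      _ = c * r ^ (-α) * ‖y‖ ^ (-β) := by ring

theorem setLIntegral_norm_ge_mul_norm_sub_rpow_neg_le [μ.IsAddLeftInvariant] [μ.IsNegInvariant]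
    (hα : 0 ≤ α) (hβ : 0 ≤ β) (hρ : 0 < ρ) (hc : 0 ≤ c)
    (hdecay : ∀ y : E, ρ ≤ ‖y‖ → f y ≤ c * ‖y‖ ^ (-β)) (hx : 2 * ρ ≤ ‖x‖) :
    ∫⁻ y in (‖·‖) ⁻¹' Ici (‖x‖ / 2), ENNReal.ofReal (f y * ‖x - y‖ ^ (-α)) ∂μ ≤
      ENNReal.ofReal (c * (‖x‖ / 2) ^ (-β)) *
          ∫⁻ y in ball 0 (‖x‖ / 2), ENNReal.ofReal (‖y‖ ^ (-α)) ∂μ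
      + ENNReal.ofReal (c * 3 ^ α) *
          ∫⁻ y in (‖·‖) ⁻¹' Ici (‖x‖ / 2), ENNReal.ofReal (‖y‖ ^ (-(α + β))) ∂μ := by
  set r := ‖x‖ / 2 with hr
  have hρr : ρ ≤ r := by linarith
  have hr0 : 0 < r := hρ.trans_le hρr
  have hcover : (‖·‖) ⁻¹' Ici r ⊆ ball x r ∪ ((‖·‖) ⁻¹' Ici r \ ball x r) := by
    intro y hy
    by_cases h : y ∈ ball x r
    · exact Or.inl h
    · exact Or.inr ⟨hy, h⟩
  refine (lintegral_mono_set hcover).trans ((lintegral_union_le _ _ _).trans (add_le_add ?_ ?_))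
  · rw [← setLIntegral_ball_comp_sub_left μ (fun z => ENNReal.ofReal (‖z‖ ^ (-α)))]
    refine setLIntegral_ofReal_le_const_mul μ measurableSet_ball (by positivity) fun y hy => ?_
    have hry : r ≤ ‖y‖ :=
      half_norm_le_norm_of_norm_sub_lt_half (by rwa [mem_ball', dist_eq_norm] at hy)
    refine mul_le_mul_of_nonneg_right ?_ (by positivity)
    calc f y ≤ c * ‖y‖ ^ (-β) := hdecay y (hρr.trans hry)
      _ ≤ c * r ^ (-β) :=
          mul_le_mul_of_nonneg_left (Real.rpow_le_rpow_of_nonpos hr0 hry (neg_nonpos.mpr hβ)) hc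
  · refine (setLIntegral_ofReal_le_const_mul μ (k := c * 3 ^ α) (G := fun y => ‖y‖ ^ (-(α + β)))
      ((measurable_norm measurableSet_Ici).diff measurableSet_ball) (by positivity)
      fun y ⟨(hry : r ≤ ‖y‖), hxy⟩ => ?_).trans (by gcongr; exact sdiff_subset)
    rw [mem_ball', dist_eq_norm, not_lt] at hxy
    have hy0 : 0 < ‖y‖ := hr0.trans_le hry
    calc f y * ‖x - y‖ ^ (-α) ≤ (c * ‖y‖ ^ (-β)) * (3 ^ α * ‖y‖ ^ (-α)) :=
          mul_le_mul (hdecay y (hρr.trans hry)) (rpow_neg_norm_sub_le_three_rpow_mul hα hy0 hxy)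
            (by positivity) (by positivity)
      _ = c * 3 ^ α * ‖y‖ ^ (-(α + β)) := by
          rw [neg_add, Real.rpow_add hy0]; ring

theorem lintegral_mul_norm_sub_rpow_neg_le [μ.IsAddLeftInvariant] [μ.IsNegInvariant]
    (hα : 0 ≤ α) (hβ : 0 ≤ β) (hρ : 0 < ρ) (hc : 0 ≤ c) (hf0 : ∀ y, 0 ≤ f y)
    (hdecay : ∀ y : E, ρ ≤ ‖y‖ → f y ≤ c * ‖y‖ ^ (-β)) (hx : 2 * ρ ≤ ‖x‖) :
    ∫⁻ y, ENNReal.ofReal (f y * ‖x - y‖ ^ (-α)) ∂μ ≤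
      ENNReal.ofReal ((‖x‖ / 2) ^ (-α)) * ∫⁻ y in ball 0 ρ, ENNReal.ofReal (f y) ∂μ
      + ENNReal.ofReal (c * (‖x‖ / 2) ^ (-α)) *
          ∫⁻ y in (‖·‖) ⁻¹' Ico ρ (‖x‖ / 2), ENNReal.ofReal (‖y‖ ^ (-β)) ∂μ
      + (ENNReal.ofReal (c * (‖x‖ / 2) ^ (-β)) *
          ∫⁻ y in ball 0 (‖x‖ / 2), ENNReal.ofReal (‖y‖ ^ (-α)) ∂μ
      + ENNReal.ofReal (c * 3 ^ α) *
          ∫⁻ y in (‖·‖) ⁻¹' Ici (‖x‖ / 2), ENNReal.ofReal (‖y‖ ^ (-(α + β))) ∂μ) := by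
  rw [← setLIntegral_univ, ← union_compl_self ((‖·‖) ⁻¹' Iio (‖x‖ / 2)), ← preimage_compl,
    compl_Iio]
  exact (lintegral_union_le _ _ _).trans (add_le_add
    (setLIntegral_norm_lt_mul_norm_sub_rpow_neg_le μ hα hρ hc hf0 hdecay hx)
    (setLIntegral_norm_ge_mul_norm_sub_rpow_neg_le μ hα hβ hρ hc hdecay hx))

end Decomposition

theorem measureReal_ball_pos {E : Type*} [NormedAddCommGroup E] [ProperSpace E]
    [MeasurableSpace E] [BorelSpace E] (μ : Measure E) [μ.IsAddHaarMeasure] (x : E) {r : ℝ}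
    (hr : 0 < r) : 0 < μ.real (ball x r) :=
  ENNReal.toReal_pos (measure_ball_pos μ x hr).ne' measure_ball_lt_top.ne

theorem div_two_rpow {a : ℝ} (ha : 0 ≤ a) (t : ℝ) : (a / 2) ^ t = 2 ^ (-t) * a ^ t := by
  rw [Real.div_rpow ha zero_le_two, Real.rpow_neg zero_le_two, div_eq_inv_mul]

section Haar

variable {E : Type*} [NormedAddCommGroup E] [NormedSpace ℝ E] [FiniteDimensional ℝ E]
  [MeasurableSpace E] [BorelSpace E] [Nontrivial E] (μ : Measure E) [μ.IsAddHaarMeasure]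

theorem lintegral_fun_norm_addHaar {g : ℝ → ℝ≥0∞} (hg : Measurable g) :
    ∫⁻ x, g ‖x‖ ∂μ = dim E * μ (ball 0 1) *
      ∫⁻ r in Ioi (0 : ℝ), ENNReal.ofReal (r ^ (dim E - 1)) * g r := by
  calc ∫⁻ x, g ‖x‖ ∂μ = ∫⁻ x : ({0}ᶜ : Set E), g ‖x.1‖ ∂(μ.comap (↑)) := by
        rw [lintegral_subtype_comap (measurableSet_singleton _).compl (fun x => g ‖x‖),
          restrict_compl_singleton]
    _ = ∫⁻ p, g p.2 ∂(μ.toSphere.prod (Measure.volumeIoiPow (dim E - 1))) := by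
        rw [← (μ.measurePreserving_homeomorphUnitSphereProd).lintegral_comp_emb
          (Homeomorph.measurableEmbedding _)]
        simp
    _ = μ.toSphere univ * ∫⁻ r, g r ∂(Measure.volumeIoiPow (dim E - 1)) := by
        rw [lintegral_prod (fun p : sphere (0 : E) 1 × Ioi (0 : ℝ) => g p.2)
          (hg.comp (measurable_subtype_coe.comp measurable_snd)).aemeasurable]
        simp [mul_comm]
    _ = _ := by
        rw [Measure.toSphere_apply_univ, Measure.volumeIoiPow,
          lintegral_withDensity_eq_lintegral_mul _ (by fun_prop) (g := fun r : Ioi (0 : ℝ) => g r)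
            (hg.comp measurable_subtype_coe),
          ← lintegral_subtype_comap measurableSet_Ioi
            fun r => ENNReal.ofReal (r ^ (dim E - 1)) * g r]
        rfl

theorem setLIntegral_norm_preimage_rpow_neg {I : Set ℝ} (hI : MeasurableSet I) {s : ℝ}
    (hint : IntegrableOn (fun r : ℝ => r ^ ((dim E : ℝ) - s - 1)) (I ∩ Ioi 0)) :
    ∫⁻ x in (‖·‖) ⁻¹' I, ENNReal.ofReal (‖x‖ ^ (-s)) ∂μ =
      ENNReal.ofReal (dim E * μ.real (ball 0 1) * ∫ r in I ∩ Ioi 0, r ^ ((dim E : ℝ) - s - 1)) := by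
  have hpow : ∀ r : ℝ, 0 < r → r ^ (dim E - 1) * r ^ (-s) = r ^ ((dim E : ℝ) - s - 1) := by
    intro r hr
    rw [← Real.rpow_natCast, ← Real.rpow_add hr, Nat.cast_pred Module.finrank_pos]
    ring_nf
  calc ∫⁻ x in (‖·‖) ⁻¹' I, ENNReal.ofReal (‖x‖ ^ (-s)) ∂μ
      = ∫⁻ x, I.indicator (fun r => ENNReal.ofReal (r ^ (-s))) ‖x‖ ∂μ := by
        rw [← lintegral_indicator (measurable_norm hI)]
        rfl
    _ = dim E * μ (ball 0 1) * ∫⁻ r in I ∩ Ioi 0, ENNReal.ofReal (r ^ ((dim E : ℝ) - s - 1)) := by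
        rw [lintegral_fun_norm_addHaar μ ((by fun_prop : Measurable fun r : ℝ =>
          ENNReal.ofReal (r ^ (-s))).indicator hI),
          ← setLIntegral_indicator hI fun r => ENNReal.ofReal (r ^ ((dim E : ℝ) - s - 1))]
        congr 1
        refine setLIntegral_congr_fun measurableSet_Ioi fun r hr => ?_
        by_cases hrI : r ∈ I
        · simp only [indicator_of_mem hrI]
          rw [← ENNReal.ofReal_mul (pow_nonneg (le_of_lt hr) _), hpow r hr]
        · simp [indicator_of_notMem hrI]
    _ = _ := by
        rw [← ofReal_integral_eq_lintegral_ofReal hint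
          ((ae_restrict_iff' (hI.inter measurableSet_Ioi)).mpr
            (ae_of_all _ fun r hr => Real.rpow_nonneg (le_of_lt hr.2) _)),
          ENNReal.ofReal_mul (by positivity), ENNReal.ofReal_mul (by positivity),
          ENNReal.ofReal_natCast, measureReal_def, ENNReal.ofReal_toReal measure_ball_lt_top.ne]

theorem setLIntegral_ball_norm_rpow_neg {s : ℝ} (hs : s < dim E) {b : ℝ} (hb : 0 ≤ b) :
    ∫⁻ x in ball (0 : E) b, ENNReal.ofReal (‖x‖ ^ (-s)) ∂μ =
      ENNReal.ofReal (dim E * μ.real (ball 0 1) * (b ^ ((dim E : ℝ) - s) / ((dim E : ℝ) - s))) := by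
  have hexp : -1 < (dim E : ℝ) - s - 1 := by linarith
  have hIoo : Iio b ∩ Ioi 0 = Ioo 0 b := by ext; simp [and_comm]
  have hint : IntegrableOn (fun r : ℝ => r ^ ((dim E : ℝ) - s - 1)) (Ioo 0 b) :=
    ((intervalIntegral.intervalIntegrable_rpow' hexp).1).mono_set Ioo_subset_Ioc_self
  rw [← hIoo] at hint
  rw [show ball (0 : E) b = (‖·‖) ⁻¹' Iio b by ext; simp, setLIntegral_norm_preimage_rpow_neg μ
    measurableSet_Iio hint, hIoo, ← integral_Ioc_eq_integral_Ioo,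
    ← intervalIntegral.integral_of_le hb, integral_rpow (Or.inl hexp), sub_add_cancel,
    Real.zero_rpow (by linarith), sub_zero]

theorem setLIntegral_norm_ge_rpow_neg {s : ℝ} (hs : dim E < s) {b : ℝ} (hb : 0 < b) :
    ∫⁻ x in (‖·‖) ⁻¹' Ici b, ENNReal.ofReal (‖x‖ ^ (-s)) ∂μ =
      ENNReal.ofReal (dim E * μ.real (ball (0 : E) 1) * (b ^ ((dim E : ℝ) - s) / (s - dim E))) := by
  have hexp : (dim E : ℝ) - s - 1 < -1 := by linarith
  have hIci : Ici b ∩ Ioi 0 = Ici b := inter_eq_left.mpr (Ici_subset_Ioi.mpr hb)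
  have hint : IntegrableOn (fun r : ℝ => r ^ ((dim E : ℝ) - s - 1)) (Ici b ∩ Ioi 0) := by
    rw [hIci, integrableOn_Ici_iff_integrableOn_Ioi]
    exact integrableOn_Ioi_rpow_of_lt hexp hb
  rw [setLIntegral_norm_preimage_rpow_neg μ measurableSet_Ici hint, hIci,
    integral_Ici_eq_integral_Ioi,
    integral_Ioi_rpow_of_lt hexp hb, sub_add_cancel, neg_div, ← div_neg, neg_sub]

theorem setLIntegral_annulus_norm_rpow_neg_finrank {a b : ℝ} (ha : 0 < a) (hab : a ≤ b) :
    ∫⁻ x in (‖·‖) ⁻¹' Ico a b, ENNReal.ofReal (‖x‖ ^ (-(dim E : ℝ))) ∂μ =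
      ENNReal.ofReal (dim E * μ.real (ball (0 : E) 1) * Real.log (b / a)) := by
  have hIco : Ico a b ∩ Ioi 0 = Ico a b := inter_eq_left.mpr fun r hr => ha.trans_le hr.1
  have hexp : (dim E : ℝ) - dim E - 1 = -1 := by ring
  have hint : IntegrableOn (fun r : ℝ => r ^ ((dim E : ℝ) - dim E - 1)) (Ico a b ∩ Ioi 0) := by
    rw [hIco, hexp]
    exact (ContinuousOn.rpow_const continuousOn_id fun r hr =>
      Or.inl (ha.trans_le hr.1).ne').integrableOn_Icc.mono_set Ico_subset_Icc_self
  rw [setLIntegral_norm_preimage_rpow_neg μ measurableSet_Ico hint, hIco, hexp,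
    integral_Ico_eq_integral_Ioo,
    ← integral_Ioc_eq_integral_Ioo, ← intervalIntegral.integral_of_le hab]
  simp only [Real.rpow_neg_one]
  rw [integral_inv_of_pos ha (ha.trans_le hab)]

theorem lintegral_mul_norm_sub_rpow_neg_le_ofReal {f : E → ℝ} {α β ρ c : ℝ} (hα : 0 ≤ α)
    (hαd : α < dim E) (hαβ : dim E < α + β) (hρ : 0 < ρ) (hc : 0 ≤ c)
    (hf : LocallyIntegrable f μ) (hf0 : ∀ y, 0 ≤ f y)
    (hdecay : ∀ y : E, ρ ≤ ‖y‖ → f y ≤ c * ‖y‖ ^ (-β)) {x : E} (hx : 2 * ρ ≤ ‖x‖) {J : ℝ}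
    (hJ0 : 0 ≤ J)
    (hJ : ∫⁻ y in (‖·‖) ⁻¹' Ico ρ (‖x‖ / 2), ENNReal.ofReal (‖y‖ ^ (-β)) ∂μ ≤ ENNReal.ofReal J) :
    ∫⁻ y, ENNReal.ofReal (f y * ‖x - y‖ ^ (-α)) ∂μ ≤ ENNReal.ofReal
      ((‖x‖ / 2) ^ (-α) * (∫ y in ball 0 ρ, f y ∂μ + c * J) +
        c * dim E * μ.real (ball 0 1) * (1 / (dim E - α) + 3 ^ α / (α + β - dim E)) *
          (‖x‖ / 2) ^ ((dim E : ℝ) - α - β)) := by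
  have hr0 : 0 < ‖x‖ / 2 := by linarith
  set r := ‖x‖ / 2
  set d : ℝ := (dim E : ℝ)
  set V := μ.real (ball (0 : E) 1)
  set M := ∫ y in ball 0 ρ, f y ∂μ
  have hM0 : 0 ≤ M := setIntegral_nonneg measurableSet_ball fun y _ => hf0 y
  have hM : ∫⁻ y in ball 0 ρ, ENNReal.ofReal (f y) ∂μ = ENNReal.ofReal M :=
    (ofReal_integral_eq_lintegral_ofReal (hf.integrableOn_isCompact (isCompact_closedBall 0 ρ)
      |>.mono_set ball_subset_closedBall) (ae_of_all _ fun y => hf0 y)).symm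
  have hV : 0 ≤ V := measureReal_nonneg
  have hdα : 0 < d - α := sub_pos.mpr hαd
  have hαβd : 0 < α + β - d := sub_pos.mpr hαβ
  refine (lintegral_mul_norm_sub_rpow_neg_le μ hα (by linarith) hρ hc hf0 hdecay hx).trans ?_
  rw [hM, setLIntegral_ball_norm_rpow_neg μ hαd hr0.le, setLIntegral_norm_ge_rpow_neg μ hαβ hr0]
  calc _ ≤ ENNReal.ofReal (r ^ (-α)) * ENNReal.ofReal M + ENNReal.ofReal (c * r ^ (-α)) *
          ENNReal.ofReal J + (ENNReal.ofReal (c * r ^ (-β)) *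
          ENNReal.ofReal (d * V * (r ^ (d - α) / (d - α))) + ENNReal.ofReal (c * 3 ^ α) *
          ENNReal.ofReal (d * V * (r ^ (d - (α + β)) / (α + β - d)))) := by
        gcongr
    _ = ENNReal.ofReal (r ^ (-α) * M + c * r ^ (-α) * J
        + (c * r ^ (-β) * (d * V * (r ^ (d - α) / (d - α)))
        + c * 3 ^ α * (d * V * (r ^ (d - (α + β)) / (α + β - d))))) := by
        rw [← ENNReal.ofReal_mul (by positivity), ← ENNReal.ofReal_mul (by positivity),
          ← ENNReal.ofReal_mul (by positivity), ← ENNReal.ofReal_mul (by positivity),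
          ENNReal.ofReal_add (by positivity) (by positivity),
          ENNReal.ofReal_add (by positivity) (by positivity),
          ENNReal.ofReal_add (by positivity) (by positivity)]
    _ = _ := by
        have hpow : r ^ (-β) * r ^ (d - α) = r ^ (d - α - β) := by
          rw [← Real.rpow_add hr0]; ring_nf
        rw [show d - (α + β) = d - α - β by ring, ← hpow]
        congr 1
        field_simp

theorem integral_mul_norm_sub_rpow_neg_le {f : E → ℝ} {α β ρ c : ℝ} (hα : 0 ≤ α)
    (hαd : α < dim E) (hαβ : dim E < α + β) (hρ : 0 < ρ) (hc : 0 ≤ c)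
    (hf : LocallyIntegrable f μ) (hf0 : ∀ y, 0 ≤ f y)
    (hdecay : ∀ y : E, ρ ≤ ‖y‖ → f y ≤ c * ‖y‖ ^ (-β)) {x : E} (hx : 2 * ρ ≤ ‖x‖) {J : ℝ}
    (hJ0 : 0 ≤ J)
    (hJ : ∫⁻ y in (‖·‖) ⁻¹' Ico ρ (‖x‖ / 2), ENNReal.ofReal (‖y‖ ^ (-β)) ∂μ ≤ ENNReal.ofReal J) :
    ∫ y, f y * ‖x - y‖ ^ (-α) ∂μ ≤
      (‖x‖ / 2) ^ (-α) * (∫ y in ball 0 ρ, f y ∂μ + c * J) +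
        c * dim E * μ.real (ball 0 1) * (1 / (dim E - α) + 3 ^ α / (α + β - dim E)) *
          (‖x‖ / 2) ^ ((dim E : ℝ) - α - β) := by
  have hmeas : AEStronglyMeasurable (fun y => f y * ‖x - y‖ ^ (-α)) μ :=
    hf.aestronglyMeasurable.mul
      (by fun_prop : Measurable fun y : E => ‖x - y‖ ^ (-α)).aestronglyMeasurable
  have hM0 : 0 ≤ ∫ y in ball 0 ρ, f y ∂μ := setIntegral_nonneg measurableSet_ball fun y _ => hf0 y
  have hdα : 0 < (dim E : ℝ) - α := sub_pos.mpr hαd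
  have hαβd : 0 < α + β - dim E := sub_pos.mpr hαβ
  have hV : 0 ≤ μ.real (ball (0 : E) 1) := measureReal_nonneg
  rw [integral_eq_lintegral_of_nonneg_ae (ae_of_all _ fun y => mul_nonneg (hf0 y) (by positivity))
    hmeas]
  exact ENNReal.toReal_le_of_le_ofReal (by positivity)
    (lintegral_mul_norm_sub_rpow_neg_le_ofReal μ hα hαd hαβ hρ hc hf hf0 hdecay hx hJ0 hJ)

theorem exists_integral_mul_norm_sub_rpow_neg_le_of_lt {f : E → ℝ} {α β ρ c : ℝ} (hα : 0 ≤ α)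
    (hαd : α < dim E) (hαβ : dim E < α + β) (hβd : β < dim E) (hρ : 0 < ρ) (hc : 0 < c)
    (hf : LocallyIntegrable f μ) (hf0 : ∀ y, 0 ≤ f y)
    (hdecay : ∀ y : E, ρ ≤ ‖y‖ → f y ≤ c * ‖y‖ ^ (-β)) :
    ∃ C > 0, ∀ x : E, 2 * ρ ≤ ‖x‖ →
      ∫ y, f y * ‖x - y‖ ^ (-α) ∂μ ≤ C * ‖x‖ ^ ((dim E : ℝ) - α - β) := by
  set d : ℝ := (dim E : ℝ)
  set V := μ.real (ball (0 : E) 1)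
  set M := ∫ y in ball 0 ρ, f y ∂μ
  set K := c * d * V * (1 / (d - α) + 3 ^ α / (α + β - d))
  have hM0 : 0 ≤ M := setIntegral_nonneg measurableSet_ball fun y _ => hf0 y
  have hV : 0 < V := measureReal_ball_pos μ 0 one_pos
  have hd : 0 < d := by linarith
  have hdβ : 0 < d - β := sub_pos.mpr hβd
  have hK : 0 < K := by
    have := sub_pos.mpr hαd; have := sub_pos.mpr hαβ
    positivity
  refine ⟨(M * ρ ^ (β - d) + c * (d * V / (d - β)) + K) * 2 ^ (α + β - d), by positivity,
    fun x hx => ?_⟩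
  set r := ‖x‖ / 2 with hr
  have hr0 : 0 < r := by linarith
  have hJ : ∫⁻ y in (‖·‖) ⁻¹' Ico ρ r, ENNReal.ofReal (‖y‖ ^ (-β)) ∂μ ≤
      ENNReal.ofReal (d * V * (r ^ (d - β) / (d - β))) :=
    (lintegral_mono_set fun y hy => mem_ball_zero_iff.mpr hy.2).trans
      (setLIntegral_ball_norm_rpow_neg μ hβd hr0.le).le
  refine (integral_mul_norm_sub_rpow_neg_le μ hα hαd hαβ hρ hc.le hf hf0 hdecay hx (by positivity)
    hJ).trans ?_
  have hρr : r ^ (-α) ≤ ρ ^ (β - d) * r ^ (d - α - β) :=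
    calc r ^ (-α) = r ^ (β - d) * r ^ (d - α - β) := by rw [← Real.rpow_add hr0]; ring_nf
      _ ≤ ρ ^ (β - d) * r ^ (d - α - β) := mul_le_mul_of_nonneg_right
          (Real.rpow_le_rpow_of_nonpos hρ (by linarith) (by linarith)) (by positivity)
  have hsplit : r ^ (-α) * r ^ (d - β) = r ^ (d - α - β) := by
    rw [← Real.rpow_add hr0]; ring_nf
  calc r ^ (-α) * (M + c * (d * V * (r ^ (d - β) / (d - β)))) + K * r ^ (d - α - β)
      = M * r ^ (-α) + (c * (d * V / (d - β)) + K) * r ^ (d - α - β) := by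
        rw [← hsplit]; ring
    _ ≤ M * (ρ ^ (β - d) * r ^ (d - α - β)) + (c * (d * V / (d - β)) + K) * r ^ (d - α - β) := by
        gcongr
    _ = _ := by
        rw [div_two_rpow (norm_nonneg x)]
        ring_nf

theorem exists_integral_mul_norm_sub_rpow_neg_le_of_gt {f : E → ℝ} {α β ρ c : ℝ} (hα : 0 ≤ α)
    (hαd : α < dim E) (hβd : dim E < β) (hρ : 0 < ρ) (hc : 0 < c)
    (hf : LocallyIntegrable f μ) (hf0 : ∀ y, 0 ≤ f y)
    (hdecay : ∀ y : E, ρ ≤ ‖y‖ → f y ≤ c * ‖y‖ ^ (-β)) :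
    ∃ C > 0, ∀ x : E, 2 * ρ ≤ ‖x‖ → ∫ y, f y * ‖x - y‖ ^ (-α) ∂μ ≤ C * ‖x‖ ^ (-α) := by
  set d : ℝ := (dim E : ℝ)
  set V := μ.real (ball (0 : E) 1)
  set M := ∫ y in ball 0 ρ, f y ∂μ
  set K := c * d * V * (1 / (d - α) + 3 ^ α / (α + β - d))
  set J := d * V * (ρ ^ (d - β) / (β - d))
  have hM0 : 0 ≤ M := setIntegral_nonneg measurableSet_ball fun y _ => hf0 y
  have hV : 0 < V := measureReal_ball_pos μ 0 one_pos
  have hd : 0 < d := by linarith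
  have hβd' : 0 < β - d := sub_pos.mpr hβd
  have hJ0 : 0 < J := by positivity
  have hK : 0 < K := by
    have := sub_pos.mpr hαd; have := sub_pos.mpr (by linarith : d < α + β)
    positivity
  refine ⟨(M + c * J + K * ρ ^ (d - β)) * 2 ^ α, by positivity, fun x hx => ?_⟩
  set r := ‖x‖ / 2 with hr
  have hr0 : 0 < r := by linarith
  have hJ : ∫⁻ y in (‖·‖) ⁻¹' Ico ρ r, ENNReal.ofReal (‖y‖ ^ (-β)) ∂μ ≤ ENNReal.ofReal J :=
    (lintegral_mono_set fun y (hy : y ∈ (‖·‖) ⁻¹' Ico ρ r) => (hy.1 : ρ ≤ ‖y‖)).trans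
      (setLIntegral_norm_ge_rpow_neg μ hβd hρ).le
  refine (integral_mul_norm_sub_rpow_neg_le μ hα hαd (by linarith) hρ hc.le hf hf0 hdecay hx hJ0.le
    hJ).trans ?_
  have hρr : r ^ (d - α - β) ≤ ρ ^ (d - β) * r ^ (-α) :=
    calc r ^ (d - α - β) = r ^ (d - β) * r ^ (-α) := by rw [← Real.rpow_add hr0]; ring_nf
      _ ≤ ρ ^ (d - β) * r ^ (-α) := mul_le_mul_of_nonneg_right
          (Real.rpow_le_rpow_of_nonpos hρ (by linarith) (by linarith)) (by positivity)
  calc r ^ (-α) * (M + c * J) + K * r ^ (d - α - β)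
      ≤ r ^ (-α) * (M + c * J) + K * (ρ ^ (d - β) * r ^ (-α)) := by gcongr
    _ = _ := by
        rw [div_two_rpow (norm_nonneg x), neg_neg]
        ring

theorem exists_integral_mul_norm_sub_rpow_neg_le_of_eq {f : E → ℝ} {α ρ c : ℝ} (hα : 0 < α)
    (hαd : α < dim E) (hρ : 1 / 2 < ρ) (hc : 0 < c)
    (hf : LocallyIntegrable f μ) (hf0 : ∀ y, 0 ≤ f y)
    (hdecay : ∀ y : E, ρ ≤ ‖y‖ → f y ≤ c * ‖y‖ ^ (-(dim E : ℝ))) :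
    ∃ C > 0, ∀ x : E, 2 * ρ ≤ ‖x‖ →
      ∫ y, f y * ‖x - y‖ ^ (-α) ∂μ ≤ C * ‖x‖ ^ (-α) * Real.log ‖x‖ := by
  set d : ℝ := (dim E : ℝ)
  set V := μ.real (ball (0 : E) 1)
  set M := ∫ y in ball 0 ρ, f y ∂μ
  set K := c * d * V * (1 / (d - α) + 3 ^ α / (α + d - d))
  have hρ0 : 0 < ρ := by linarith
  have hlog2ρ : 0 < Real.log (2 * ρ) := Real.log_pos (by linarith)
  have hV : 0 < V := measureReal_ball_pos μ 0 one_pos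
  have hd : 0 < d := by linarith
  have hM0 : 0 ≤ M := setIntegral_nonneg measurableSet_ball fun y _ => hf0 y
  have hK : 0 < K := by
    have := sub_pos.mpr hαd
    have : 0 < α + d - d := by linarith
    positivity
  refine ⟨2 ^ α * ((M + K) / Real.log (2 * ρ) + c * (d * V)), by positivity, fun x hx => ?_⟩
  set r := ‖x‖ / 2 with hr
  have hρr : ρ ≤ r := by linarith
  have hJ : ∫⁻ y in (‖·‖) ⁻¹' Ico ρ r, ENNReal.ofReal (‖y‖ ^ (-d)) ∂μ ≤
      ENNReal.ofReal (d * V * Real.log (r / ρ)) :=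
    (setLIntegral_annulus_norm_rpow_neg_finrank μ hρ0 hρr).le
  have hlogr : Real.log (r / ρ) ≤ Real.log ‖x‖ :=
    Real.log_le_log (div_pos (by linarith) hρ0) (by
      rw [div_le_iff₀ hρ0, hr]; nlinarith)
  have hlogx : 1 ≤ Real.log ‖x‖ / Real.log (2 * ρ) := by
    rw [le_div_iff₀ hlog2ρ, one_mul]
    exact Real.log_le_log (by linarith) hx
  refine (integral_mul_norm_sub_rpow_neg_le μ hα.le hαd (by linarith) hρ0 hc.le hf hf0 hdecay hx
    (by have := Real.log_nonneg ((one_le_div hρ0).mpr hρr); positivity) hJ).trans ?_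
  calc r ^ (-α) * (M + c * (d * V * Real.log (r / ρ))) + K * r ^ (d - α - d)
      = r ^ (-α) * ((M + K) + c * (d * V) * Real.log (r / ρ)) := by
        rw [show d - α - d = -α by ring]; ring
    _ ≤ r ^ (-α) * ((M + K) * (Real.log ‖x‖ / Real.log (2 * ρ)) + c * (d * V) * Real.log ‖x‖) := by
        gcongr
        exact le_mul_of_one_le_right (by positivity) hlogx
    _ = _ := by
        rw [div_two_rpow (norm_nonneg x), neg_neg]
        field_simp

end Haar

theorem stmt_12_general (N : ℕ) (α β ρ c : ℝ)
    (hα0 : 0 < α) (hαN : α < N) (hβ : (N : ℝ) - α < β) (hρ : 1 / 2 < ρ) (hc : 0 < c)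
    (f : EuclideanSpace ℝ (Fin N) → ℝ)
    (hf : LocallyIntegrable f volume) (hf0 : ∀ x, 0 ≤ f x)
    (hdecay : ∀ x : EuclideanSpace ℝ (Fin N), ρ ≤ ‖x‖ → f x ≤ c * ‖x‖ ^ (-β)) :
    ∃ C : ℝ, 0 < C ∧ ∀ x : EuclideanSpace ℝ (Fin N), 2 * ρ ≤ ‖x‖ →
      (β < N → (∫ y : EuclideanSpace ℝ (Fin N), f y * ‖x - y‖ ^ (-α))
          ≤ C * ‖x‖ ^ ((N : ℝ) - α - β)) ∧
      (β = N → (∫ y : EuclideanSpace ℝ (Fin N), f y * ‖x - y‖ ^ (-α))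
          ≤ C * ‖x‖ ^ (-α) * Real.log ‖x‖) ∧
      ((N : ℝ) < β → (∫ y : EuclideanSpace ℝ (Fin N), f y * ‖x - y‖ ^ (-α))
          ≤ C * ‖x‖ ^ (-α)) := by
  have : NeZero N := ⟨by rintro rfl; simp at hαN; linarith⟩
  have hdim : (dim (EuclideanSpace ℝ (Fin N)) : ℝ) = N := by simp
  rw [← hdim] at hαN hβ ⊢
  have hρ0 : 0 < ρ := by linarith
  rcases lt_trichotomy β (dim (EuclideanSpace ℝ (Fin N))) with hβN | rfl | hβN
  · obtain ⟨C, hC, hbound⟩ := exists_integral_mul_norm_sub_rpow_neg_le_of_lt volume hα0.le hαN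
      (by linarith) hβN hρ0 hc hf hf0 hdecay
    exact ⟨C, hC, fun x hx => ⟨fun _ => hbound x hx, fun h => absurd h hβN.ne,
      fun h => absurd h hβN.not_gt⟩⟩
  · obtain ⟨C, hC, hbound⟩ := exists_integral_mul_norm_sub_rpow_neg_le_of_eq volume hα0 hαN hρ hc
      hf hf0 hdecay
    exact ⟨C, hC, fun x hx => ⟨fun h => absurd h (lt_irrefl _), fun _ => hbound x hx,
      fun h => absurd h (lt_irrefl _)⟩⟩
  · obtain ⟨C, hC, hbound⟩ := exists_integral_mul_norm_sub_rpow_neg_le_of_gt volume hα0.le hαN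
      hβN hρ0 hc hf hf0 hdecay
    exact ⟨C, hC, fun x hx => ⟨fun h => absurd h hβN.not_gt, fun h => absurd h hβN.ne',
      fun _ => hbound x hx⟩⟩

theorem stmt_12 (N : ℕ) (hN : 1 ≤ N) (α β ρ c : ℝ)
    (hα0 : 0 < α) (hαN : α < N) (hβ : (N : ℝ) - α < β) (hρ : 1 / 2 < ρ) (hc : 0 < c)
    (f : EuclideanSpace ℝ (Fin N) → ℝ)
    (hf : LocallyIntegrable f volume) (hf0 : ∀ x, 0 ≤ f x)
    (hdecay : ∀ x : EuclideanSpace ℝ (Fin N), ρ ≤ ‖x‖ → f x ≤ c * ‖x‖ ^ (-β)) :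
    ∃ C : ℝ, 0 < C ∧ ∀ x : EuclideanSpace ℝ (Fin N), 2 * ρ ≤ ‖x‖ →
      (β < N → (∫ y : EuclideanSpace ℝ (Fin N), f y * ‖x - y‖ ^ (-α))
          ≤ C * ‖x‖ ^ ((N : ℝ) - α - β)) ∧
      (β = N → (∫ y : EuclideanSpace ℝ (Fin N), f y * ‖x - y‖ ^ (-α))
          ≤ C * ‖x‖ ^ (-α) * Real.log ‖x‖) ∧
      ((N : ℝ) < β → (∫ y : EuclideanSpace ℝ (Fin N), f y * ‖x - y‖ ^ (-α))
          ≤ C * ‖x‖ ^ (-α)) :=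
  stmt_12_general N α β ρ c hα0 hαN hβ hρ hc f hf hf0 hdecay
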